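/- $G_3(-4w(1-w)) = \frac{\sin(\pi w)}{\pi w (1-w)}$ for all $w \in \mathbb{C} \setminus \{0, 1\}$, where $G_3(z) = \prod_{k=1}^\infty \bigl(1 - \frac{z}{4k(k+1)}\bigr)$. -/

import Mathlib

open Real

/-- The entire function `G₃(z) = ∏_{k≥1} (1 - z/(4k(k+1)))`. -/
noncomputable def Gthree (z : ℂ) : ℂ :=
  ∏' k : ℕ, (1 - z / (4 * ((k : ℂ) + 1) * ((k : ℂ) + 2)))

/-!
With `z = -4w(1-w)` the `k`-th factor of `G₃` is `(k+1+w)(k+2-w)/((k+1)(k+2))`, while the factor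
`1 - w²/(k+1)²` of Euler's sine product is `(k+1-w)(k+1+w)/(k+1)²`. The partial products therefore
telescope against each other up to the factor `(n+1-w)/((n+1)(1-w)) → 1/(1-w)`, and the identity
follows from `sin(πw) = πw ∏ (1 - w²/k²)`.
-/

open Filter Topology Finset

lemma summable_norm_div_four_mul_succ_mul_succ (z : ℂ) :
    Summable fun k : ℕ => ‖z / (4 * ((k : ℂ) + 1) * ((k : ℂ) + 2))‖ := by
  refine (summable_pow_div_add z 2 1 one_lt_two).of_nonneg_of_le (fun _ => norm_nonneg _)
    fun k => ?_
  rw [show 4 * ((k : ℂ) + 1) * ((k : ℂ) + 2) = ((4 * (k + 1) * (k + 2) : ℕ) : ℂ) by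
      push_cast; ring,
    show ((k : ℂ) + (1 : ℕ)) ^ 2 = (((k + 1) ^ 2 : ℕ) : ℂ) by push_cast; ring,
    norm_div, norm_div, Complex.norm_natCast, Complex.norm_natCast]
  gcongr
  nlinarith

lemma multipliable_Gthree (z : ℂ) :
    Multipliable fun k : ℕ => 1 - z / (4 * ((k : ℂ) + 1) * ((k : ℂ) + 2)) := by
  simp_rw [sub_eq_add_neg]
  exact multipliable_one_add_of_summable
    (by simpa using summable_norm_div_four_mul_succ_mul_succ z)

lemma prod_range_Gthree_factor_mul (w : ℂ) (n : ℕ) :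
    (∏ k ∈ range n, (1 - -4 * w * (1 - w) / (4 * ((k : ℂ) + 1) * ((k : ℂ) + 2)))) *
        ((1 - w) * ((n : ℂ) + 1)) =
      (∏ k ∈ range n, (1 + sineTerm w k)) * ((n : ℂ) + 1 - w) := by
  induction n with
  | zero => simp
  | succ n ih =>
    have h1 : (n : ℂ) + 1 ≠ 0 := n.cast_add_one_ne_zero
    have h2 : (n : ℂ) + 2 ≠ 0 := by norm_cast
    rw [prod_range_succ, prod_range_succ]
    generalize ∏ k ∈ range n, (1 + sineTerm w k) = S at ih ⊢
    generalize ∏ k ∈ range n, (1 - -4 * w * (1 - w) / (4 * ((k : ℂ) + 1) * ((k : ℂ) + 2))) = P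
      at ih ⊢
    rw [sineTerm]
    push_cast
    field_simp
    linear_combination ((n : ℂ) + 2) * ((n : ℂ) + 1 + w) * ((n : ℂ) + 2 - w) * ih

lemma tendsto_natCast_add_one_sub_div (w : ℂ) :
    Tendsto (fun n : ℕ => ((n : ℂ) + 1 - w) / (n + 1)) atTop (𝓝 1) := by
  have h := tendsto_add_mul_div_add_mul_atTop_nhds (1 - w) 1 1 (one_ne_zero (α := ℂ))
  rw [div_one] at h
  exact h.congr fun n => by ring_nf

theorem Gthree_eval (w : ℂ) (hw0 : w ≠ 0) (hw1 : w ≠ 1) :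
    Gthree (-4 * w * (1 - w)) = Complex.sin (π * w) / (π * w * (1 - w)) := by
  have hw1' : 1 - w ≠ 0 := sub_ne_zero.mpr hw1.symm
  have hpartial : ∀ n : ℕ,
      ∏ k ∈ range n, (1 - -4 * w * (1 - w) / (4 * ((k : ℂ) + 1) * ((k : ℂ) + 2))) =
        (∏ k ∈ range n, (1 + sineTerm w k)) * (((n : ℂ) + 1 - w) / (n + 1)) / (1 - w) := by
    intro n
    have h1 : (n : ℂ) + 1 ≠ 0 := n.cast_add_one_ne_zero
    rw [eq_div_iff hw1', mul_div_assoc', eq_div_iff h1, mul_assoc, prod_range_Gthree_factor_mul]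
  have hlim := ((tendsto_euler_sin_prod' hw0).mul (tendsto_natCast_add_one_sub_div w)).div_const
    (1 - w)
  rw [mul_one, div_div] at hlim
  exact ((multipliable_Gthree _).hasProd_iff_tendsto_nat.mpr
    (hlim.congr fun n => (hpartial n).symm)).tprod_eq
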